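/- Let B be a family of blocks in a monoid M with parameter type Θ, and assume additionally that every block index admits an identity parameter, i.e. for each i there exists e ∈ Θ with B i e = 1. Let n ≥ 1 and r ≥ 1. For any r parameter assignments θ_1, …, θ_r for zigzags of height n, there exists a parameter assignment ψ such that the product L_{1,n}(θ_1) * L_{1,n}(θ_2) * ⋯ * L_{1,n}(θ_r) = T_n(ψ); that is, a product of r zigzags of height n compresses into a single triangle of height n. -/

import Mathlib

/-- The cascade `C_{i,j}(θ) = B i (θ i) * B (i+1) (θ (i+1)) * ⋯ * B j (θ j)`. -/
def cascade {M Θ : Type*} [Monoid M] (B : ℕ → Θ → M) (i j : ℕ) (θ : ℕ → Θ) : M :=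
  ((List.range (j + 1 - i)).map (fun k => B (i + k) (θ (i + k)))).prod

/-- The triangle `T_n(θ) = C_{n,n} * C_{n-1,n} * ⋯ * C_{1,n}`, where the `k`-th cascade
`C_{n-k,n}` carries its own parameters `θ k`. -/
def triangle {M Θ : Type*} [Monoid M] (B : ℕ → Θ → M) (n : ℕ) (θ : ℕ → ℕ → Θ) : M :=
  ((List.range n).map (fun k => cascade B (n - k) n (θ k))).prod

/-- The zigzag `L_{1,n}(θ)`: the product of the odd-indexed blocks `B k (θ k)` for
`1 ≤ k ≤ n` (in increasing order of `k`), followed by the product of the even-indexed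
blocks `B k (θ k)` for `1 ≤ k ≤ n` (in increasing order of `k`). -/
def zigzag {M Θ : Type*} [Monoid M] (B : ℕ → Θ → M) (n : ℕ) (θ : ℕ → Θ) : M :=
  (((((List.range n).map (· + 1)).filter (fun k => k % 2 = 1)).map
      (fun k => B k (θ k))).prod) *
  (((((List.range n).map (· + 1)).filter (fun k => k % 2 = 0)).map
      (fun k => B k (θ k))).prod)

/-!
Triangles absorb blocks on the right: for `1 ≤ i ≤ n`, `T_n(ψ) * B i α = T_n(ψ')`. The block meets
the last cascade `C_{j,n}` of a partial triangle. If `i = n`, fusion merges it into the last block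
of `C_{j,n}`. If `j ≤ i < n`, it commutes left past `C_{i+2,n}`, turnover rewrites
`B i * B (i+1) * B i` as `B (i+1) * B i * B (i+1)`, and the new `B (i+1)` commutes left past
`C_{j,i-1}` into the shorter partial triangle, where it is absorbed in the same way. A zigzag of
height `n` is a word in such blocks and the triangle with identity parameters is `1`, so a product
of zigzags is `T_n(e) * (…)`, again a triangle.
-/

section Blocks

variable {M Θ : Type*} [Monoid M] (B : ℕ → Θ → M)

structure IsBlockFamily : Prop where
  fusion : ∀ (i : ℕ) (α β : Θ), ∃ a : Θ, B i α * B i β = B i a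
  comm : ∀ (i j : ℕ), 1 < Nat.dist i j → ∀ (α β : Θ), B i α * B j β = B j β * B i α
  turnover : ∀ (i : ℕ) (α β γ : Θ), ∃ a b c : Θ,
    B i α * B (i + 1) β * B i γ = B (i + 1) a * B i b * B (i + 1) c

lemma cascade_congr {i j : ℕ} {θ θ' : ℕ → Θ} (h : ∀ k, i ≤ k → k ≤ j → θ k = θ' k) :
    cascade B i j θ = cascade B i j θ' := by
  unfold cascade
  congr 1
  refine List.map_congr_left fun k hk => ?_
  rw [List.mem_range] at hk
  rw [h (i + k) (Nat.le_add_right _ _) (by omega)]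

lemma cascade_append {i j l : ℕ} (hij : i ≤ j + 1) (hjl : j ≤ l) (θ : ℕ → Θ) :
    cascade B i l θ = cascade B i j θ * cascade B (j + 1) l θ := by
  unfold cascade
  rw [show l + 1 - i = (j + 1 - i) + (l + 1 - (j + 1)) by omega, List.range_add,
    List.map_append, List.prod_append, List.map_map]
  congr 2
  refine List.map_congr_left fun k _ => ?_
  simp only [Function.comp_apply, show i + (j + 1 - i + k) = j + 1 + k by omega]

lemma cascade_self (i : ℕ) (θ : ℕ → Θ) : cascade B i i θ = B i (θ i) := by
  simp [cascade, List.range_succ]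

lemma cascade_pred_mul_block {j n : ℕ} (hj : 1 ≤ j) (hjn : j ≤ n) (θ : ℕ → Θ) :
    cascade B j (n - 1) θ * B n (θ n) = cascade B j n θ := by
  rw [cascade_append B (j := n - 1) (l := n) (by omega) (by omega), Nat.sub_add_cancel (by omega),
    cascade_self]

lemma Commute.cascade_right {x : M} {i l : ℕ} {θ : ℕ → Θ}
    (h : ∀ k, i ≤ k → k ≤ l → Commute x (B k (θ k))) : Commute x (cascade B i l θ) := by
  refine Commute.list_prod_right _ _ fun y hy => ?_
  obtain ⟨k, hk, rfl⟩ := List.mem_map.mp hy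
  rw [List.mem_range] at hk
  exact h _ (by omega) (by omega)

lemma exists_cascade_mul_block_eq_cascade
    (hfusion : ∀ (i : ℕ) (α β : Θ), ∃ a : Θ, B i α * B i β = B i a)
    {j n : ℕ} (hj : 1 ≤ j) (hjn : j ≤ n) (θ : ℕ → Θ) (α : Θ) :
    ∃ θ' : ℕ → Θ, cascade B j n θ * B n α = cascade B j n θ' := by
  obtain ⟨a, ha⟩ := hfusion n (θ n) α
  refine ⟨Function.update θ n a, ?_⟩
  have hprefix : cascade B j (n - 1) θ = cascade B j (n - 1) (Function.update θ n a) :=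
    cascade_congr B fun k _ hk => (Function.update_of_ne (by omega) _ _).symm
  rw [← cascade_pred_mul_block B hj hjn, ← cascade_pred_mul_block B hj hjn, mul_assoc, ha,
    hprefix, Function.update_self]

lemma exists_cascade_mul_block_eq_block_mul_cascade
    (hcomm : ∀ (i j : ℕ), 1 < Nat.dist i j → ∀ (α β : Θ), B i α * B j β = B j β * B i α)
    (hturnover : ∀ (i : ℕ) (α β γ : Θ), ∃ a b c : Θ,
      B i α * B (i + 1) β * B i γ = B (i + 1) a * B i b * B (i + 1) c)
    {j i n : ℕ} (hj : 1 ≤ j) (hji : j ≤ i) (hin : i < n) (θ : ℕ → Θ) (α : Θ) :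
    ∃ (a : Θ) (θ' : ℕ → Θ), cascade B j n θ * B i α = B (i + 1) a * cascade B j n θ' := by
  obtain ⟨a, b, c, habc⟩ := hturnover i (θ i) (θ (i + 1)) α
  set θ' := Function.update (Function.update θ i b) (i + 1) c
  refine ⟨a, θ', ?_⟩
  have hsplit : ∀ τ : ℕ → Θ, cascade B j n τ =
      cascade B j (i - 1) τ * (B i (τ i) * (B (i + 1) (τ (i + 1)) * cascade B (i + 2) n τ)) := by
    intro τ
    rw [cascade_append B (j := i) (by omega) (by omega) τ, ← cascade_pred_mul_block B hj hji,
      cascade_append B (i := i + 1) (j := i + 1) (by omega) (by omega), cascade_self]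
    simp only [mul_assoc]
  have hθ'_of_ne : ∀ k, k ≠ i → k ≠ i + 1 → θ' k = θ k := fun k hki hki1 => by
    simp only [θ', Function.update_of_ne hki1, Function.update_of_ne hki]
  have hprefix : cascade B j (i - 1) θ' = cascade B j (i - 1) θ :=
    cascade_congr B fun k _ hk => hθ'_of_ne k (by omega) (by omega)
  have hsuffix : cascade B (i + 2) n θ' = cascade B (i + 2) n θ :=
    cascade_congr B fun k hk _ => hθ'_of_ne k (by omega) (by omega)
  have hθ'i : θ' i = b := by simp [θ']
  have hθ'i1 : θ' (i + 1) = c := by simp [θ']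
  have hα_suffix : Commute (B i α) (cascade B (i + 2) n θ) :=
    Commute.cascade_right B fun k hk _ => hcomm i k (by simp [Nat.dist]; omega) α (θ k)
  have ha_prefix : Commute (B (i + 1) a) (cascade B j (i - 1) θ) :=
    Commute.cascade_right B fun k _ hk => hcomm (i + 1) k (by simp [Nat.dist]; omega) a (θ k)
  rw [hsplit θ, hsplit θ', hprefix, hsuffix, hθ'i, hθ'i1]
  calc _ = cascade B j (i - 1) θ * (B i (θ i) * B (i + 1) (θ (i + 1)) * B i α) *
        cascade B (i + 2) n θ := by simp only [mul_assoc, hα_suffix.right_comm]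
    _ = (cascade B j (i - 1) θ * B (i + 1) a) * (B i b * B (i + 1) c) *
        cascade B (i + 2) n θ := by rw [habc]; simp only [mul_assoc]
    _ = _ := by rw [← ha_prefix.eq]; simp only [mul_assoc]

/-- The product `C_{n,n} * C_{n-1,n} * ⋯ * C_{n-m+1,n}` of the first `m` cascades of `T_n`. -/
def partialTriangle (n m : ℕ) (ψ : ℕ → ℕ → Θ) : M :=
  ((List.range m).map fun k => cascade B (n - k) n (ψ k)).prod

lemma partialTriangle_succ (n m : ℕ) (ψ : ℕ → ℕ → Θ) :
    partialTriangle B n (m + 1) ψ = partialTriangle B n m ψ * cascade B (n - m) n (ψ m) := by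
  simp [partialTriangle, List.range_succ]

lemma partialTriangle_congr {n m : ℕ} {ψ ψ' : ℕ → ℕ → Θ} (h : ∀ k < m, ψ k = ψ' k) :
    partialTriangle B n m ψ = partialTriangle B n m ψ' := by
  unfold partialTriangle
  congr 1
  exact List.map_congr_left fun k hk => by rw [h k (List.mem_range.mp hk)]

lemma partialTriangle_succ_update (n m : ℕ) (ψ : ℕ → ℕ → Θ) (θ : ℕ → Θ) :
    partialTriangle B n (m + 1) (Function.update ψ m θ) =
      partialTriangle B n m ψ * cascade B (n - m) n θ := by
  rw [partialTriangle_succ, Function.update_self,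
    partialTriangle_congr B fun k hk => Function.update_of_ne (Nat.ne_of_lt hk) _ _]

lemma IsBlockFamily.exists_partialTriangle_mul_block {B : ℕ → Θ → M} (hB : IsBlockFamily B)
    {n m i : ℕ} (hmn : m ≤ n) (hi : n + 1 - m ≤ i) (hin : i ≤ n) (ψ : ℕ → ℕ → Θ) (α : Θ) :
    ∃ ψ' : ℕ → ℕ → Θ, partialTriangle B n m ψ * B i α = partialTriangle B n m ψ' := by
  induction m generalizing i α with
  | zero => omega
  | succ m ih =>
    rw [partialTriangle_succ, mul_assoc]
    rcases hin.eq_or_lt with rfl | hin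
    · obtain ⟨θ', hθ'⟩ := exists_cascade_mul_block_eq_cascade B hB.fusion
        (by omega : 1 ≤ i - m) (Nat.sub_le i m) (ψ m) α
      exact ⟨Function.update ψ m θ', by rw [hθ', partialTriangle_succ_update]⟩
    · obtain ⟨a, θ', hθ'⟩ := exists_cascade_mul_block_eq_block_mul_cascade B hB.comm
        hB.turnover (by omega : 1 ≤ n - m) (by omega : n - m ≤ i) hin (ψ m) α
      obtain ⟨ψ', hψ'⟩ := ih (by omega) (i := i + 1) (by omega) (by omega) a
      exact ⟨Function.update ψ' m θ', by
        rw [hθ', ← mul_assoc, hψ', partialTriangle_succ_update]⟩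

lemma triangle_eq_one {e : ℕ → Θ} (he : ∀ i, B i (e i) = 1) (n : ℕ) :
    triangle B n (fun _ => e) = 1 :=
  List.prod_eq_one fun _ hx => by
    obtain ⟨_, _, rfl⟩ := List.mem_map.mp hx
    exact List.prod_eq_one fun _ hy => by
      obtain ⟨_, _, rfl⟩ := List.mem_map.mp hy
      exact he _

def triangleAbsorber (n : ℕ) : Submonoid M where
  carrier := {x | ∀ ψ, ∃ ψ', triangle B n ψ * x = triangle B n ψ'}
  one_mem' ψ := ⟨ψ, mul_one _⟩
  mul_mem' {x y} hx hy ψ := by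
    obtain ⟨ψ₁, h₁⟩ := hx ψ
    obtain ⟨ψ₂, h₂⟩ := hy ψ₁
    exact ⟨ψ₂, by rw [← mul_assoc, h₁, h₂]⟩

variable {B}

lemma IsBlockFamily.block_mem_triangleAbsorber (hB : IsBlockFamily B) {n i : ℕ}
    (hi : 1 ≤ i) (hin : i ≤ n) (α : Θ) : B i α ∈ triangleAbsorber B n :=
  fun ψ => hB.exists_partialTriangle_mul_block le_rfl (by omega) hin ψ α

lemma IsBlockFamily.zigzag_mem_triangleAbsorber (hB : IsBlockFamily B) (n : ℕ) (θ : ℕ → Θ) :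
    zigzag B n θ ∈ triangleAbsorber B n := by
  have hblocks : ∀ p : ℕ → Bool,
      ((((List.range n).map (· + 1)).filter p).map fun k => B k (θ k)).prod ∈
        triangleAbsorber B n := fun p =>
    Submonoid.list_prod_mem _ fun x hx => by
      obtain ⟨k, hk, rfl⟩ := List.mem_map.mp hx
      obtain ⟨m, hm, rfl⟩ := List.mem_map.mp (List.mem_filter.mp hk).1
      exact hB.block_mem_triangleAbsorber (by omega) (by simpa using hm) _
  exact mul_mem (hblocks _) (hblocks _)

end Blocks

theorem zigzag_product_compression_general {M Θ : Type*} [Monoid M] (B : ℕ → Θ → M)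
    (hfusion : ∀ (i : ℕ) (α β : Θ), ∃ a : Θ, B i α * B i β = B i a)
    (hcomm : ∀ (i j : ℕ), 1 < Nat.dist i j → ∀ (α β : Θ),
      B i α * B j β = B j β * B i α)
    (hturnover : ∀ (i : ℕ) (α β γ : Θ), ∃ a b c : Θ,
      B i α * B (i + 1) β * B i γ = B (i + 1) a * B i b * B (i + 1) c)
    (hid : ∀ i : ℕ, ∃ e : Θ, B i e = 1)
    (n r : ℕ) :
    ∀ θ : Fin r → ℕ → Θ, ∃ ψ : ℕ → ℕ → Θ,
      (List.ofFn (fun k : Fin r => zigzag B n (θ k))).prod = triangle B n ψ := by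
  intro θ
  have hB : IsBlockFamily B := ⟨hfusion, hcomm, hturnover⟩
  choose e he using hid
  have hmem : (List.ofFn fun k => zigzag B n (θ k)).prod ∈ triangleAbsorber B n :=
    Submonoid.list_prod_mem _ fun x hx => by
      obtain ⟨k, rfl⟩ := List.mem_ofFn.mp hx
      exact hB.zigzag_mem_triangleAbsorber n (θ k)
  obtain ⟨ψ, hψ⟩ := hmem fun _ => e
  exact ⟨ψ, by rwa [triangle_eq_one B he, one_mul] at hψ⟩

/-- **Corollary (compression for time-dependent Hamiltonians).**  Let `B` be a family of
blocks in a monoid `M` (satisfying fusion, commutation and turnover) such that every block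
index admits an identity parameter.  For `n ≥ 1` and `r ≥ 1`, a product of `r` zigzags of
height `n` compresses into a single triangle of height `n`. -/
theorem zigzag_product_compression {M Θ : Type*} [Monoid M] (B : ℕ → Θ → M)
    (hfusion : ∀ (i : ℕ) (α β : Θ), ∃ a : Θ, B i α * B i β = B i a)
    (hcomm : ∀ (i j : ℕ), 1 < Nat.dist i j → ∀ (α β : Θ),
      B i α * B j β = B j β * B i α)
    (hturnover : ∀ (i : ℕ) (α β γ : Θ), ∃ a b c : Θ,
      B i α * B (i + 1) β * B i γ = B (i + 1) a * B i b * B (i + 1) c)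
    (hid : ∀ i : ℕ, ∃ e : Θ, B i e = 1)
    (n r : ℕ) (hn : 1 ≤ n) (hr : 1 ≤ r) :
    ∀ θ : Fin r → ℕ → Θ, ∃ ψ : ℕ → ℕ → Θ,
      (List.ofFn (fun k : Fin r => zigzag B n (θ k))).prod = triangle B n ψ :=
  zigzag_product_compression_general B hfusion hcomm hturnover hid n r
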